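/- arXiv:2001.03161 — 6 statements merged into one kernel-verified Lean document; each statement's English description precedes it below -/
import Mathlib

section
/- Let G be an undirected simple graph with distinguished vertices s and t, and let T be a tracking set for G (a set of vertices such that any two distinct s-t paths yield different sequences of vertices of T). Then T is a feedback vertex set of the subgraph of G induced by the vertices and edges that participate in at least one s-t path; i.e., deleting T from that subgraph leaves an acyclic graph. -/
/-!
Suppose a cycle `C` of the subgraph spanned by the s-t paths avoids `T`. Some s-t path `P`
contains an edge of `C`; let `a` and `b` be the first and the last vertex of `P` on `C`, so that
`a ≠ b`. Replacing the segment of `P` between `a` and `b` by either of the two `a`-`b` arcs of `C`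
yields two distinct s-t paths which differ only inside `C`, so they meet the vertices of `T` in
the same order.
-/

namespace SimpleGraph.Walk

variable {V : Type*} {G : SimpleGraph V} {u v w : V}

lemma exists_eq_append_of_first_mem (S : Set V) (p : G.Walk u w)
    (h : ∃ x ∈ p.support, x ∈ S) :
    ∃ a ∈ S, ∃ (q : G.Walk u a) (r : G.Walk a w),
      p = q.append r ∧ ∀ x ∈ q.support, x ∈ S → x = a := by
  induction p with
  | nil =>
    obtain ⟨x, hx, hxS⟩ := h
    rw [support_nil, List.mem_singleton] at hx
    subst hx
    exact ⟨x, hxS, nil, nil, rfl, by simp⟩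
  | @cons u _ _ hadj p ih =>
    by_cases huS : u ∈ S
    · exact ⟨u, huS, nil, cons hadj p, rfl, by simp⟩
    obtain ⟨a, haS, q, r, rfl, hq⟩ := ih (by simpa [huS] using h)
    refine ⟨a, haS, cons hadj q, r, rfl, fun x hx hxS => ?_⟩
    rcases List.mem_cons.mp hx with rfl | hx
    · exact absurd hxS huS
    · exact hq x hx hxS

lemma exists_eq_append_of_last_mem (S : Set V) (p : G.Walk u w)
    (h : ∃ x ∈ p.support, x ∈ S) :
    ∃ b ∈ S, ∃ (q : G.Walk u b) (r : G.Walk b w),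
      p = q.append r ∧ ∀ x ∈ r.support, x ∈ S → x = b := by
  obtain ⟨b, hbS, q, r, hp, hq⟩ :=
    exists_eq_append_of_first_mem S p.reverse (by simpa using h)
  refine ⟨b, hbS, r.reverse, q.reverse, ?_, fun x hx => hq x (by simpa using hx)⟩
  rw [← reverse_append, ← hp, reverse_reverse]

lemma IsPath.append {p : G.Walk u v} {q : G.Walk v w} (hp : p.IsPath) (hq : q.IsPath)
    (h : ∀ x ∈ p.support, x ∈ q.support → x = v) : (p.append q).IsPath := by
  have hq' := hq.support_nodup
  rw [← cons_tail_support, List.nodup_cons] at hq'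
  rw [isPath_def, support_append, List.nodup_append]
  refine ⟨hp.support_nodup, hq'.2, fun x hxp y hyq hxy => ?_⟩
  subst hxy
  exact hq'.1 (h x hxp (List.mem_of_mem_tail hyq) ▸ hyq)

lemma IsPath.append_append_of_inter {s a b t : V} {A : G.Walk s a} {M D : G.Walk a b}
    {B : G.Walk b t} (hP : (A.append (M.append B)).IsPath) (hD : D.IsPath)
    (hAD : ∀ x ∈ A.support, x ∈ D.support → x = a)
    (hDB : ∀ x ∈ D.support, x ∈ B.support → x = b) (hbA : b ∉ A.support) :
    (A.append (D.append B)).IsPath := by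
  refine hP.of_append_left.append (hD.append hP.of_append_right.of_append_right hDB)
    fun x hxA hx => ?_
  rcases (mem_support_append_iff _ _).mp hx with hxD | hxB
  · exact hAD x hxA hxD
  · exfalso
    rw [← cons_tail_support, List.mem_cons] at hxB
    rcases hxB with rfl | hxB
    · exact hbA hxA
    · have hnodup := hP.support_nodup
      rw [support_append, tail_support_append, List.nodup_append] at hnodup
      exact hnodup.2.2 x hxA x (List.mem_append_right _ hxB) rfl

variable [DecidableEq V]

lemma IsCycle.exists_ne_isPath {c : G.Walk u u} (hc : c.IsCycle)
    (hv : v ∈ c.support) (huv : u ≠ v) :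
    ∃ p q : G.Walk u v, p.IsPath ∧ q.IsPath ∧ p ≠ q ∧
      p.support ⊆ c.support ∧ q.support ⊆ c.support := by
  have hspec := c.take_spec hv
  have hdrop : (c.dropUntil v hv).IsPath :=
    (hspec ▸ hc).isPath_of_append_right (not_nil_of_ne huv)
  refine ⟨c.takeUntil v hv, (c.dropUntil v hv).reverse, hc.isPath_takeUntil hv, hdrop.reverse,
    fun heq => ?_, c.support_takeUntil_subset_support hv, ?_⟩
  · -- the two arcs share no edge, so they can only coincide if they are empty
    have hdisj := hc.isTrail.disjoint_edges_takeUntil_dropUntil hv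
    rw [heq, edges_reverse, List.disjoint_reverse_left] at hdisj
    exact not_nil_of_ne huv.symm
      (edges_eq_nil.mp (List.eq_nil_iff_forall_not_mem.mpr fun e he => hdisj he he))
  · rw [support_reverse]
    exact fun x hx => c.support_dropUntil_subset_support hv (List.mem_reverse.mp hx)

lemma IsPath.exists_ne_isPath_filter_notMem_eq {s t x : V} {P : G.Walk s t} (hP : P.IsPath)
    {c : G.Walk x x} (hc : c.IsCycle) (hu : u ∈ P.support) (hv : v ∈ P.support)
    (huc : u ∈ c.support) (hvc : v ∈ c.support) (huv : u ≠ v) :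
    ∃ p q : G.Walk s t, p.IsPath ∧ q.IsPath ∧ p ≠ q ∧
      p.support.filter (· ∉ c.support) = q.support.filter (· ∉ c.support) := by
  set S : Set V := {y | y ∈ c.support}
  obtain ⟨a, haS, A, R, rfl, hA⟩ := exists_eq_append_of_first_mem S P ⟨u, hu, huc⟩
  obtain ⟨b, hbS, M, B, rfl, hB⟩ :=
    exists_eq_append_of_last_mem S R ⟨a, R.start_mem_support, haS⟩
  have hM : ∀ y ∈ (A.append (M.append B)).support, y ∈ S → y ∈ M.support := by
    intro y hy hyS
    simp only [mem_support_append_iff] at hy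
    rcases hy with hy | hy | hy
    · exact hA y hy hyS ▸ M.start_mem_support
    · exact hy
    · exact hB y hy hyS ▸ M.end_mem_support
  have hab : a ≠ b := by
    rintro rfl
    obtain ⟨⟩ := isPath_iff_nil.mp hP.of_append_right.of_append_left
    exact huv ((List.mem_singleton.mp (hM u hu huc)).trans
      (List.mem_singleton.mp (hM v hv hvc)).symm)
  have hac : a ∈ c.support := haS
  obtain ⟨D₁, D₂, hD₁, hD₂, hne, hD₁c, hD₂c⟩ :=
    (hc.rotate hac).exists_ne_isPath ((c.mem_support_rotate_iff a hac).mpr hbS) hab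
  have splice : ∀ D : G.Walk a b, D.IsPath → D.support ⊆ (c.rotate a hac).support →
      (A.append (D.append B)).IsPath ∧
      (A.append (D.append B)).support.filter (· ∉ c.support) =
        A.support.filter (· ∉ c.support) ++ B.support.tail.filter (· ∉ c.support) := by
    intro D hD hDc
    have hDc' : ∀ y ∈ D.support, y ∈ S := fun y hy =>
      (c.mem_support_rotate_iff a hac).mp (hDc hy)
    refine ⟨hP.append_append_of_inter hD (fun y hyA hyD => hA y hyA (hDc' y hyD))
      (fun y hyD hyB => hB y hyB (hDc' y hyD)) fun hbA => hab (hA b hbA hbS).symm, ?_⟩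
    have hDfilter : D.support.tail.filter (· ∉ c.support) = [] :=
      List.filter_eq_nil_iff.mpr fun y hy => by simpa [S] using hDc' y (List.mem_of_mem_tail hy)
    rw [support_append, tail_support_append, List.filter_append, List.filter_append, hDfilter,
      List.nil_append]
  refine ⟨_, _, (splice D₁ hD₁ hD₁c).1, (splice D₂ hD₂ hD₂c).1, fun h => hne ?_,
    by rw [(splice D₁ hD₁ hD₁c).2, (splice D₂ hD₂ hD₂c).2]⟩
  apply edges_injective
  simpa [edges_append] using congrArg edges h

end SimpleGraph.Walk

open SimpleGraph

def IsTrackingSet {V : Type*} [DecidableEq V] (G : SimpleGraph V) (s t : V)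
    (T : Finset V) : Prop :=
  ∀ p q : G.Path s t,
    p.1.support.filter (· ∈ T) = q.1.support.filter (· ∈ T) → p = q

lemma IsTrackingSet.exists_mem_of_isCycle {V : Type*} [DecidableEq V] {G : SimpleGraph V}
    {s t x u v : V} {T : Finset V} (hT : IsTrackingSet G s t T) (P : G.Path s t)
    {c : G.Walk x x} (hc : c.IsCycle) (hu : u ∈ P.1.support) (hv : v ∈ P.1.support)
    (huc : u ∈ c.support) (hvc : v ∈ c.support) (huv : u ≠ v) :
    ∃ y ∈ c.support, y ∈ T := by
  by_contra! hcT
  obtain ⟨p, q, hp, hq, hne, hpq⟩ := P.2.exists_ne_isPath_filter_notMem_eq hc hu hv huc hvc huv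
  have hfilter : ∀ l : List V,
      l.filter (· ∈ T) = (l.filter (· ∉ c.support)).filter (· ∈ T) := by
    intro l
    rw [List.filter_filter]
    refine List.filter_congr fun y _ => ?_
    by_cases hy : y ∈ T
    · have hyc : y ∉ c.support := fun h => hcT y h hy
      simp [hy, hyc]
    · simp [hy]
  refine hne (congrArg Subtype.val (hT ⟨p, hp⟩ ⟨q, hq⟩ ?_))
  rw [hfilter p.support, hfilter q.support, hpq]

/-- A tracking set is a feedback vertex set of the subgraph of `G`
consisting of the vertices and edges participating in some s-t path. -/
theorem tracking_set_is_fvs {V : Type*} [DecidableEq V] (G : SimpleGraph V)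
    (s t : V) (T : Finset V) (hT : IsTrackingSet G s t T) :
    ((SimpleGraph.fromEdgeSet
        {e | e ∈ G.edgeSet ∧ ∃ p : G.Path s t, e ∈ p.1.edges}).induce
      {v : V | v ∉ T}).IsAcyclic := by
  set H := SimpleGraph.fromEdgeSet {e | e ∈ G.edgeSet ∧ ∃ p : G.Path s t, e ∈ p.1.edges}
  let f : H.induce {v | v ∉ T} →g G :=
    (Hom.ofLE (fun _ _ h => h.1.1 : H ≤ G)).comp (Embedding.induce _).toHom
  intro x c hc
  cases c with
  | nil => exact hc.not_nil Walk.Nil.nil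
  | @cons _ y _ hxy c =>
    -- the first edge of the cycle lies on some s-t path `P`
    obtain ⟨P, hP⟩ := hxy.1.2
    have hcG := Walk.IsCycle.map (f := f) Subtype.val_injective hc
    obtain ⟨z, hz, hzT⟩ := hT.exists_mem_of_isCycle P hcG
      (P.1.fst_mem_support_of_mem_edges hP) (P.1.snd_mem_support_of_mem_edges hP)
      (Walk.start_mem_support _) (List.mem_cons_of_mem _ (c.map f).start_mem_support) hxy.2
    rw [Walk.support_map, List.mem_map] at hz
    obtain ⟨w, -, rfl⟩ := hz
    exact w.2 hzT
end

section
/- Let G be an s-t graph in which every vertex and edge lies on some s-t path, and let G' be any induced subgraph of G containing at least one edge. Then there exist distinct vertices u, v in G', a path P_su in G from s to u, and a path P_vt in G from v to t, such that P_su and P_vt are vertex-disjoint, P_su intersects V(G') only in u, and P_vt intersects V(G') only in v. -/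
open SimpleGraph Walk

private lemma firstHit {V : Type*} {G : SimpleGraph V} (A : Set V) :
    ∀ {x y : V} (p : G.Walk x y) (a : V), a ∈ p.support → a ∈ A →
    ∃ u, u ∈ A ∧ ∃ (q : G.Walk x u) (r : G.Walk u y),
      q.append r = p ∧ ∀ w ∈ q.support, w ∈ A → w = u := by
  intro x y p
  induction p with
  | nil =>
    intro a ha haA
    simp only [support_nil, List.mem_singleton] at ha
    subst ha
    exact ⟨a, haA, Walk.nil, Walk.nil, by simp, by simp⟩
  | @cons x b y h p' ih =>
    intro a ha haA
    by_cases hx : x ∈ A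
    · exact ⟨x, hx, Walk.nil, Walk.cons h p', by simp, by simp⟩
    · have ha' : a ∈ p'.support := by
        simp only [support_cons, List.mem_cons] at ha
        rcases ha with rfl | ha'
        · exact absurd haA hx
        · exact ha'
      obtain ⟨u, huA, q', r, hqr, hq⟩ := ih a ha' haA
      refine ⟨u, huA, Walk.cons h q', r, by rw [Walk.cons_append, hqr], ?_⟩
      intro w hw hwA
      simp only [support_cons, List.mem_cons] at hw
      rcases hw with rfl | hw
      · exact absurd hwA hx
      · exact hq w hw hwA

private lemma lastHit {V : Type*} {G : SimpleGraph V} (A : Set V)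
    {x y : V} (p : G.Walk x y) (a : V) (ha : a ∈ p.support) (haA : a ∈ A) :
    ∃ v, v ∈ A ∧ ∃ (q : G.Walk x v) (r : G.Walk v y),
      q.append r = p ∧ ∀ w ∈ r.support, w ∈ A → w = v := by
  have ha' : a ∈ p.reverse.support := by rwa [support_reverse, List.mem_reverse]
  obtain ⟨v, hvA, q, r, hqr, hq⟩ := firstHit A p.reverse a ha' haA
  refine ⟨v, hvA, r.reverse, q.reverse, ?_, ?_⟩
  · rw [← Walk.reverse_append, hqr, Walk.reverse_reverse]
  · intro w hw hwA
    rw [support_reverse, List.mem_reverse] at hw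
    exact hq w hw hwA

private lemma endTail {V : Type*} {G : SimpleGraph V} {u v : V} (q : G.Walk u v) :
    v ∈ q.support.tail ∨ q.support = [u] := by
  cases q with
  | nil => right; simp
  | cons h p => left; simp [support_cons]


/-- every induced subgraph (on vertex set `A`) with at least one
edge has a local source and a local destination, witnessed by vertex-disjoint
paths from `s` and to `t` meeting `A` only at those vertices. -/
theorem exists_local_source_destination {V : Type*} (G : SimpleGraph V)
    (s t : V)
    (hpartV : ∀ v : V, ∃ p : G.Path s t, v ∈ p.1.support)
    (hpartE : ∀ e ∈ G.edgeSet, ∃ p : G.Path s t, e ∈ p.1.edges)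
    (A : Set V) (hA : ∃ u ∈ A, ∃ v ∈ A, G.Adj u v) :
    ∃ u ∈ A, ∃ v ∈ A, ∃ (Psu : G.Walk s u) (Pvt : G.Walk v t),
      Psu.IsPath ∧ Pvt.IsPath ∧
      (∀ w ∈ Psu.support, w ∉ Pvt.support) ∧
      (∀ w ∈ Psu.support, w ∈ A → w = u) ∧
      (∀ w ∈ Pvt.support, w ∈ A → w = v) := by
  obtain ⟨u₀, hu₀, v₀, hv₀, hadj⟩ := hA
  obtain ⟨p, hp⟩ := hpartE s(u₀, v₀) hadj
  have hu₀s : u₀ ∈ p.1.support := p.1.fst_mem_support_of_mem_edges hp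
  have hv₀s : v₀ ∈ p.1.support := p.1.snd_mem_support_of_mem_edges hp
  have hne : u₀ ≠ v₀ := hadj.ne
  obtain ⟨u, huA, q₁, r₁, heq1, hq1A⟩ := firstHit A p.1 u₀ hu₀s hu₀
  -- choose a ∈ A with a ≠ u, a ∈ p.support
  obtain ⟨a, haA, has, hau⟩ : ∃ a, a ∈ A ∧ a ∈ p.1.support ∧ a ≠ u := by
    by_cases h : u₀ = u
    · exact ⟨v₀, hv₀, hv₀s, fun hh => hne (h ▸ hh ▸ rfl)⟩
    · exact ⟨u₀, hu₀, hu₀s, h⟩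
  have hnd : p.1.support.Nodup := p.2.support_nodup
  -- a ∈ r₁.support
  have har : a ∈ r₁.support := by
    rw [← heq1, Walk.mem_support_append_iff] at has
    rcases has with h | h
    · exact absurd (hq1A a h haA) hau
    · exact h
  obtain ⟨v, hvA, q₂, r₂, heq2, hr2A⟩ := lastHit A r₁ a har haA
  -- decomposition of support
  have hsup : p.1.support = q₁.support ++ (q₂.support.tail ++ r₂.support.tail) := by
    rw [← heq1, ← heq2, Walk.support_append, Walk.tail_support_append]
  have hnd' : (q₁.support ++ (q₂.support.tail ++ r₂.support.tail)).Nodup := hsup ▸ hnd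
  have hdisj1 : ∀ w ∈ q₁.support, w ∉ q₂.support.tail := fun w hw hw' =>
    (List.disjoint_of_nodup_append hnd') hw (List.mem_append_left _ hw')
  have hdisj2 : ∀ w ∈ q₁.support, w ∉ r₂.support.tail := fun w hw hw' =>
    (List.disjoint_of_nodup_append hnd') hw (List.mem_append_right _ hw')
  -- v ≠ u
  have hvu : v ≠ u := by
    intro hvu
    rcases endTail q₂ with h | h
    · exact hdisj1 u q₁.end_mem_support (hvu ▸ h)
    · -- q₂.support = [u], so v = u anyway; locate a
      have haq : a ∈ q₂.support ∨ a ∈ r₂.support := by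
        have : a ∈ r₁.support := har
        rw [← heq2, Walk.mem_support_append_iff] at this
        exact this
      rcases haq with h' | h'
      · rw [h] at h'; simp at h'; exact hau h'
      · exact hau ((hr2A a h' haA).trans hvu)
  have hvq : v ∈ q₂.support.tail := by
    rcases endTail q₂ with h | h
    · exact h
    · exfalso; exact hvu (by have := q₂.end_mem_support; rw [h] at this; simpa using this)
  refine ⟨u, huA, v, hvA, q₁, r₂, ?_, ?_, ?_, hq1A, hr2A⟩
  · have : p.1.IsPath := p.2
    rw [← heq1] at this
    exact this.of_append_left
  · have : p.1.IsPath := p.2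
    rw [← heq1, ← heq2] at this
    exact this.of_append_right.of_append_right
  · intro w hw hw'
    rw [Walk.support_eq_cons r₂] at hw'
    rcases List.mem_cons.1 hw' with rfl | h'
    · exact hdisj1 w hw hvq
    · exact hdisj2 w hw h'
end

section
/- Let G be an s-t graph whose vertex set is V(Tr) ∪ {t}, where Tr is a tree containing s with at least two vertices, every leaf of Tr is adjacent to t, and t has exactly δ neighbors, all in V(Tr). Then every tracking set for G contains at least δ − 1 vertices, all of which lie in V(Tr). -/
namespace SimpleGraph

variable {W : Type*} {H : SimpleGraph W}

theorem Walk.IsPath.filter_support_eq_takeUntil [DecidableEq W] {a b w : W} {P : H.Walk a b}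
    (hP : P.IsPath) (p : W → Bool) (hw : w ∈ P.support)
    (hlast : (P.support.filter p).getLast? = some w) :
    P.support.filter p = (P.takeUntil w hw).support.filter p := by
  have hsplit : P.support = (P.takeUntil w hw).support ++ (P.dropUntil w hw).support.tail := by
    conv_lhs => rw [← P.take_spec hw]
    rw [Walk.support_append]
  have hnodup := hP.support_nodup
  rw [hsplit] at hnodup hlast ⊢
  rw [List.filter_append] at hlast ⊢
  suffices hnil : ((P.dropUntil w hw).support.tail).filter p = [] by
    rw [hnil, List.append_nil]
  by_contra hne
  -- then `w` would also occur after itself on the path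
  rw [List.getLast?_append_of_ne_nil _ hne] at hlast
  exact List.disjoint_of_nodup_append hnodup (Walk.end_mem_support _)
    (List.mem_of_mem_filter (List.mem_of_getLast? hlast))

theorem IsAcyclic.filter_support_eq_of_getLast?_eq_some [DecidableEq W] (hH : H.IsAcyclic)
    {a u w : W} {P : H.Walk a u} (hP : P.IsPath) (R : H.Path a w) (p : W → Bool)
    (hlast : (P.support.filter p).getLast? = some w) :
    P.support.filter p = R.1.support.filter p := by
  have hw : w ∈ P.support := List.mem_of_mem_filter (List.mem_of_getLast? hlast)
  rw [hP.filter_support_eq_takeUntil p hw hlast]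
  have := (hH.subsingleton_path a w).elim ⟨_, hP.takeUntil hw⟩ R
  exact congrArg (fun R : H.Path a w => R.1.support.filter p) this

theorem IsAcyclic.filter_support_eq_of_getLast?_eq [DecidableEq W] (hH : H.IsAcyclic)
    {a u v : W} {P : H.Walk a u} {Q : H.Walk a v} (hP : P.IsPath) (hQ : Q.IsPath)
    (p : W → Bool)
    (h : (P.support.filter p).getLast? = (Q.support.filter p).getLast?) :
    P.support.filter p = Q.support.filter p := by
  cases hlast : (P.support.filter p).getLast? with
  | none =>
    rw [hlast, eq_comm] at h
    rw [List.getLast?_eq_none_iff.mp hlast, List.getLast?_eq_none_iff.mp h]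
  | some w =>
    rw [hlast] at h
    have hw : w ∈ P.support := List.mem_of_mem_filter (List.mem_of_getLast? hlast)
    let R : H.Path a w := ⟨_, hP.takeUntil hw⟩
    rw [hH.filter_support_eq_of_getLast?_eq_some hP R p hlast,
      hH.filter_support_eq_of_getLast?_eq_some hQ R p h.symm]

theorem IsAcyclic.card_image_filter_support_le [DecidableEq W] (hH : H.IsAcyclic) {a : W}
    {P : ∀ u, H.Walk a u} (hP : ∀ u, (P u).IsPath) (p : W → Bool) (N R : Finset W)
    (hpR : ∀ x, p x → x ∈ R) :
    (N.image fun u => (P u).support.filter p).card ≤ R.card + 1 := by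
  have hmaps : ∀ L ∈ N.image fun u => (P u).support.filter p,
      L.getLast? ∈ insert none (R.image some) := by
    simp only [Finset.mem_image]
    rintro L ⟨u, -, rfl⟩
    cases hlast : ((P u).support.filter p).getLast? with
    | none => exact Finset.mem_insert_self _ _
    | some w =>
      have hw := hpR w (List.of_mem_filter (List.mem_of_getLast? hlast))
      exact Finset.mem_insert_of_mem (Finset.mem_image_of_mem _ hw)
  have hinj : Set.InjOn List.getLast?
      ((N.image fun u => (P u).support.filter p : Finset (List W)) : Set (List W)) := by
    simp only [Finset.coe_image]
    rintro _ ⟨u, -, rfl⟩ _ ⟨v, -, rfl⟩ h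
    exact hH.filter_support_eq_of_getLast?_eq (hP u) (hP v) _ h
  calc _ ≤ (insert none (R.image some)).card := Finset.card_le_card_of_injOn _ hmaps hinj
    _ ≤ (R.image some).card + 1 := Finset.card_insert_le _ _
    _ = R.card + 1 := by rw [Finset.card_image_of_injective _ (Option.some_injective W)]

variable {V : Type*} {G : SimpleGraph V}

theorem Walk.IsPath.concat_map {f : H →g G} (hf : Function.Injective f) {a u : W}
    {P : H.Walk a u} (hP : P.IsPath) {t : V} (ht : t ∉ Set.range f) (h : G.Adj (f u) t) :
    ((P.map f).concat h).IsPath := by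
  refine (hP.map hf).concat ?_ h
  simp only [Walk.support_map, List.mem_map, not_exists, not_and]
  exact fun x _ hx => ht ⟨x, hx⟩

theorem Walk.filter_support_concat_map (f : H →g G) {a u : W} (P : H.Walk a u) {t : V}
    (h : G.Adj (f u) t) (p : V → Bool) :
    ((P.map f).concat h).support.filter p = (P.support.filter (p ∘ f)).map f ++ [t].filter p := by
  rw [Walk.support_concat, List.filter_append, Walk.support_map, List.filter_map]

end SimpleGraph

open SimpleGraph

theorem IsTrackingSet.injOn_filter_support_map {W V : Type*} [DecidableEq V] {H : SimpleGraph W}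
    {G : SimpleGraph V} {f : H →g G} (hf : Function.Injective f) {a : W} {t : V}
    (ht : t ∉ Set.range f) {T : Finset V} (hT : IsTrackingSet G (f a) t T)
    {P : ∀ u, H.Walk a u} (hP : ∀ u, (P u).IsPath) :
    Set.InjOn (fun u => (P u).support.filter fun x => f x ∈ T) {u | G.Adj (f u) t} := by
  intro u hu v hv h
  have hseq : (((P u).map f).concat hu).support.filter (· ∈ T)
      = (((P v).map f).concat hv).support.filter (· ∈ T) := by
    rw [Walk.filter_support_concat_map, Walk.filter_support_concat_map]
    exact congrArg (fun L => L.map f ++ _) h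
  have hpath := hT ⟨_, (hP u).concat_map hf ht hu⟩ ⟨_, (hP v).concat_map hf ht hv⟩ hseq
  obtain ⟨huv, -⟩ := Walk.concat_inj (congrArg Subtype.val hpath)
  exact hf huv

theorem tree_sink_at_t_lower_bound_general {V : Type*} [Fintype V] [DecidableEq V]
    (G : SimpleGraph V) [DecidableRel G.Adj] (s t : V) (A : Finset V) (δ : ℕ)
    (hsA : s ∈ A) (htA : t ∉ A)
    (htree : (G.induce (A : Set V)).IsTree)
    (hδ : G.degree t = δ) (hNt : G.neighborFinset t ⊆ A)
    (T : Finset V) (hT : IsTrackingSet G s t T) :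
    δ - 1 ≤ (T ∩ A).card := by
  choose P hP using fun u => (htree.existsUnique_path ⟨s, hsA⟩ u).exists
  set f : G.induce (A : Set V) →g G := (Embedding.induce (A : Set V)).toHom
  set N := (G.neighborFinset t).subtype (· ∈ (A : Set V))
  have hN : N.card = δ := by
    rw [Finset.card_subtype, Finset.filter_true_of_mem fun u hu => Finset.mem_coe.mpr (hNt hu),
      card_neighborFinset_eq_degree, hδ]
  have hinj : Set.InjOn (fun u => (P u).support.filter fun x => f x ∈ T) N := by
    refine (IsTrackingSet.injOn_filter_support_map (f := f) (a := ⟨s, hsA⟩)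
      Subtype.val_injective ?_ hT hP).mono ?_
    · rintro ⟨x, hx⟩
      exact htA (hx ▸ x.2)
    · intro u hu
      exact (G.mem_neighborFinset t u |>.mp (Finset.mem_subtype.mp hu)).symm
  have hcount := htree.isAcyclic.card_image_filter_support_le hP (fun x => f x ∈ T) N
    (T.subtype (· ∈ (A : Set V))) fun _ hx => Finset.mem_subtype.mpr (of_decide_eq_true hx)
  rw [Finset.card_image_of_injOn hinj, hN, Finset.card_subtype] at hcount
  simp only [Finset.mem_coe, Finset.filter_mem_eq_inter] at hcount
  omega

/-- a tree-sink structure with the destination `t` as sink. The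
vertex set of `G` is `A ∪ {t}`, `G` induces a tree on `A` containing `s`, all
leaves of that tree are adjacent to `t`, and `t` has exactly `δ` neighbors,
all in `A`. Then every tracking set contains at least `δ - 1` vertices of
`A`. -/
theorem tree_sink_at_t_lower_bound {V : Type*} [Fintype V] [DecidableEq V]
    (G : SimpleGraph V) [DecidableRel G.Adj] (s t : V) (A : Finset V) (δ : ℕ)
    (hsA : s ∈ A) (htA : t ∉ A) (hV : ∀ v : V, v ∈ A ∨ v = t)
    (hA2 : 2 ≤ A.card)
    (htree : (G.induce (A : Set V)).IsTree)
    (hleaf : ∀ v ∈ A, (A.filter (fun u => G.Adj v u)).card = 1 → G.Adj v t)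
    (hδ : G.degree t = δ) (hNt : G.neighborFinset t ⊆ A)
    (T : Finset V) (hT : IsTrackingSet G s t T) :
    δ - 1 ≤ (T ∩ A).card :=
  tree_sink_at_t_lower_bound_general G s t A δ hsA htA htree hδ hNt T hT
end

section
/- Let G be an s-t graph with deg(s) = 1, N(s) = {a}, and a ≠ t. Let G' be obtained from G by deleting s and designating a as the new source. Then G has a tracking set of size at most k if and only if G' (with source a and destination t) has a tracking set of size at most k. -/
open Function SimpleGraph

theorem isTrackingSet_iff_injective {V : Type*} [DecidableEq V] {G : SimpleGraph V} {s t : V}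
    {T : Finset V} :
    IsTrackingSet G s t T ↔ Injective fun p : G.Path s t => p.1.support.filter (· ∈ T) :=
  Iff.rfl

theorem List.filter_map_subtype_val {V : Type*} [DecidableEq V] {S : Set V} {T : Finset V}
    {T' : Finset S} (hT : ∀ x : S, x ∈ T' ↔ ↑x ∈ T) (l : List S) :
    (l.map Subtype.val).filter (· ∈ T) = (l.filter (· ∈ T')).map Subtype.val := by
  simp only [List.filter_map, comp_def, hT]

namespace SimpleGraph

variable {V : Type*} {G : SimpleGraph V}

theorem Walk.notMem_support_map_induce {S : Set V} {u v : S} (p : (G.induce S).Walk u v)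
    (x : V) (hx : x ∉ S) : x ∉ (p.map (Embedding.induce S).toHom).support := by
  simp only [Walk.support_map, List.mem_map, not_exists, not_and]
  exact fun y _ hy => hx (hy ▸ y.2)

variable {s a t : V} (has : a ≠ s) (hts : t ≠ s) (hsa : G.Adj s a)

def Path.consMapInduce (p : (G.induce {v | v ≠ s}).Path ⟨a, has⟩ ⟨t, hts⟩) : G.Path s t :=
  ⟨.cons hsa (p.1.map (Embedding.induce _).toHom),
    (p.2.map (Embedding.induce (G := G) _).injective).cons
      (Walk.notMem_support_map_induce _ _ (· rfl))⟩

theorem Path.consMapInduce_injective : Injective (Path.consMapInduce has hts hsa) := by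
  intro p q h
  have hmap := eq_of_heq (Walk.cons.inj (congrArg Subtype.val h)).2
  exact Subtype.ext
    (Walk.map_injective_of_injective (Embedding.induce (G := G) _).injective _ _ hmap)

theorem Path.consMapInduce_surjective (hN : ∀ w, G.Adj s w → w = a) :
    Surjective (Path.consMapInduce has hts hsa) := by
  rintro ⟨p, hp⟩
  cases p with
  | nil => exact absurd rfl hts
  | cons h q =>
    obtain rfl := hN _ h
    obtain ⟨hq, hsq⟩ := Walk.cons_isPath_iff _ _ |>.1 hp
    have hqS : ∀ x ∈ q.support, x ∈ {v | v ≠ s} := fun x hx hxs => hsq (hxs ▸ hx)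
    refine ⟨⟨q.induce _ hqS, .of_map (f := (Embedding.induce _).toHom) ?_⟩, ?_⟩
    · rwa [Walk.map_induce]
    · simp [consMapInduce, Walk.map_induce]

variable [DecidableEq V] {T : Finset V} {T' : Finset {v | v ≠ s}}

theorem Path.support_filter_consMapInduce (hT : ∀ x : {v | v ≠ s}, x ∈ T' ↔ ↑x ∈ T)
    (p : (G.induce {v | v ≠ s}).Path ⟨a, has⟩ ⟨t, hts⟩) :
    (p.consMapInduce has hts hsa).1.support.filter (· ∈ T) =
      [s].filter (· ∈ T) ++ (p.1.support.filter (· ∈ T')).map Subtype.val := by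
  rw [← List.filter_map_subtype_val hT, ← List.filter_append]
  exact congrArg (List.filter _) (congrArg (s :: ·) (Walk.support_map _ _))

theorem isTrackingSet_iff_isTrackingSet_induce (hN : G.neighborSet s = {a})
    (hT : ∀ x : {v | v ≠ s}, x ∈ T' ↔ ↑x ∈ T) :
    IsTrackingSet G s t T ↔
      IsTrackingSet (G.induce {v | v ≠ s}) ⟨a, has⟩ ⟨t, hts⟩ T' := by
  have hAdj (w : V) : G.Adj s w ↔ w = a := by rw [← mem_neighborSet, hN, Set.mem_singleton_iff]
  have hsa : G.Adj s a := (hAdj a).2 rfl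
  let e := Equiv.ofBijective _ ⟨Path.consMapInduce_injective has hts hsa,
    Path.consMapInduce_surjective has hts hsa fun w => (hAdj w).1⟩
  have hprefix :
      Injective fun L : List {v | v ≠ s} => [s].filter (· ∈ T) ++ L.map Subtype.val :=
    (List.append_right_injective _).comp (List.map_injective_iff.2 Subtype.val_injective)
  rw [isTrackingSet_iff_injective, isTrackingSet_iff_injective, ← e.injective_comp,
    ← hprefix.of_comp_iff]
  exact Iff.of_eq (congrArg Injective (funext (Path.support_filter_consMapInduce has hts hsa hT)))

end SimpleGraph

theorem delete_degree_one_source_general {V : Type*} [Fintype V] [DecidableEq V]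
    (G : SimpleGraph V) [DecidableRel G.Adj] (s t a : V) (k : ℕ)
    (has : a ≠ s) (hts : t ≠ s)
    (hN : G.neighborFinset s = {a}) :
    (∃ T : Finset V, IsTrackingSet G s t T ∧ T.card ≤ k) ↔
    (∃ T : Finset {v : V | v ≠ s},
      IsTrackingSet (G.induce {v : V | v ≠ s}) ⟨a, has⟩ ⟨t, hts⟩ T ∧
      T.card ≤ k) := by
  have hNs : G.neighborSet s = {a} := by
    rw [← coe_neighborFinset, hN, Finset.coe_singleton]
  constructor
  · rintro ⟨T, hT, hk⟩
    refine ⟨T.subtype (· ≠ s), ?_, ?_⟩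
    · exact (isTrackingSet_iff_isTrackingSet_induce has hts hNs fun x => Finset.mem_subtype).1 hT
    · exact (Finset.card_subtype _ _).trans_le ((Finset.card_filter_le _ _).trans hk)
  · rintro ⟨T', hT', hk⟩
    refine ⟨T'.map (Embedding.subtype _), ?_, (Finset.card_map _).trans_le hk⟩
    exact (isTrackingSet_iff_isTrackingSet_induce has hts hNs fun x =>
      (Finset.mem_map' _).symm).2 hT'

/-- if `deg(s) = 1` with unique neighbor `a ≠ t`, deleting `s`
and taking `a` as the new source preserves having a tracking set of size at
most `k`. -/
theorem delete_degree_one_source {V : Type*} [Fintype V] [DecidableEq V]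
    (G : SimpleGraph V) [DecidableRel G.Adj] (s t a : V) (k : ℕ)
    (hst : s ≠ t) (hat : a ≠ t) (has : a ≠ s) (hts : t ≠ s)
    (hdeg : G.degree s = 1) (hN : G.neighborFinset s = {a}) :
    (∃ T : Finset V, IsTrackingSet G s t T ∧ T.card ≤ k) ↔
    (∃ T : Finset {v : V | v ≠ s},
      IsTrackingSet (G.induce {v : V | v ≠ s}) ⟨a, has⟩ ⟨t, hts⟩ T ∧
      T.card ≤ k) :=
  delete_degree_one_source_general G s t a k has hts hN
end

section
/- Let G be an s-t graph containing vertices a, b, c with b ∉ {s, t}, N(b) = {a, c}, and (a, c) ∈ E(G), and suppose every vertex and edge of G lies on some s-t path. Then G has a tracking set of size at most k if and only if the graph G − b has a tracking set of size at most k − 1; moreover every tracking set of G of minimum size among those containing b satisfies that (tracking set of G) minus {b} is a tracking set for G − b. -/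
/-!
If a path passes through `b`, it enters and leaves `b` through `a` and `c`; replacing the detour
by the edge `ac` gives an s-t path avoiding `b`, its bypass, whose support is that of the path
with `b` erased. A path through `b` and its bypass are distinguished only by `b`, and `b` lies on
some s-t path, so every tracking set contains `b`; a tracking set of `G` restricts to one of
`G - b`. Conversely, a tracking set of `G - b` together with `b` tracks `G`: two paths with the
same sequence either both avoid `b`, or both pass through it and then have the same bypass, from
which the path is recovered since the edge `ac` occurs on the bypass exactly once.
-/

open SimpleGraph

namespace List

variable {α : Type*}

theorem Nodup.append_cons_cons_inj_of_sym2_eq {A₁ A₂ B₁ B₂ : List α} {x₁ y₁ x₂ y₂ : α}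
    (hnd : (A₁ ++ x₁ :: y₁ :: B₁).Nodup) (h : A₁ ++ x₁ :: y₁ :: B₁ = A₂ ++ x₂ :: y₂ :: B₂)
    (hxy : s(x₁, y₁) = s(x₂, y₂)) : A₁ = A₂ ∧ x₁ = x₂ ∧ y₁ = y₂ ∧ B₁ = B₂ := by
  have hx₁ := not_or.mp (mt mem_append.mpr (nodup_middle.mp hnd).notMem)
  rcases Sym2.eq_iff.mp hxy with ⟨rfl, rfl⟩ | ⟨rfl, rfl⟩
  · simpa using (append_cons_inj_of_notMem hx₁.1 hx₁.2).mp h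
  · rw [show A₂ ++ y₁ :: x₁ :: B₂ = (A₂ ++ [y₁]) ++ x₁ :: B₂ by simp] at h
    obtain ⟨rfl, -, rfl⟩ := (append_cons_inj_of_notMem hx₁.1 hx₁.2).mp h
    simp [nodup_append] at hnd

theorem Nodup.erase_eq_of_eq_append [DecidableEq α] {l A B : List α} {b : α} (hl : l.Nodup)
    (h : l = A ++ b :: B) : l.erase b = A ++ B := by
  subst h
  rw [erase_append_right _ fun hb => (nodup_middle.mp hl).notMem (mem_append_left _ hb),
    erase_cons_head]

theorem filter_mem_map {β : Type*} [DecidableEq α] [DecidableEq β] {f : α → β}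
    {T : Finset β} {T' : Finset α} (hTT' : ∀ x, x ∈ T' ↔ f x ∈ T) (l : List α) :
    (l.map f).filter (· ∈ T) = (l.filter (· ∈ T')).map f := by
  simp [filter_map, Function.comp_def, hTT']

end List

namespace SimpleGraph

variable {V : Type*} {G : SimpleGraph V}

theorem Path.exists_induce_support_eq {S : Set V} {u v : V} (p : G.Path u v)
    (hp : ∀ x ∈ p.1.support, x ∈ S) :
    ∃ p' : (G.induce S).Path ⟨u, hp u p.1.start_mem_support⟩ ⟨v, hp v p.1.end_mem_support⟩,
      p'.1.support.map Subtype.val = p.1.support :=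
  ⟨⟨p.1.induce S hp, .of_map (f := (Embedding.induce S).toHom) (by simp [p.2])⟩, by simp⟩

theorem Path.exists_bypass [DecidableEq V] {s t a b c : V} (hN : G.neighborSet b ⊆ {a, c})
    (hac : G.Adj a c) (hbs : b ≠ s) (hbt : b ≠ t) (p : G.Path s t) (hb : b ∈ p.1.support) :
    ∃ (x y : V) (A B : List V) (q : G.Path s t), s(x, y) = s(a, c) ∧
      p.1.support = A ++ x :: b :: y :: B ∧ q.1.support = A ++ x :: y :: B ∧
      q.1.support = p.1.support.erase b := by
  obtain ⟨x, hbx, w, hw⟩ := Walk.exists_eq_cons_of_ne hbs (p.1.takeUntil b hb).reverse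
  obtain ⟨y, hby, r, hr⟩ := Walk.exists_eq_cons_of_ne hbt (p.1.dropUntil b hb)
  obtain ⟨A, hA⟩ : ∃ A, w.support = x :: A := ⟨_, w.cons_tail_support.symm⟩
  obtain ⟨B, hB⟩ : ∃ B, r.support = y :: B := ⟨_, r.cons_tail_support.symm⟩
  have hp : p.1.support = A.reverse ++ x :: b :: y :: B := by
    conv_lhs => rw [← p.1.take_spec hb, ← (p.1.takeUntil b hb).reverse_reverse, hw, hr]
    simp [Walk.support_append, hA, hB]
  have hnd := hp ▸ p.2.support_nodup
  have hxy : s(x, y) = s(a, c) := by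
    have hne : x ≠ y := by rintro rfl; simp [List.nodup_append] at hnd
    rcases hN hbx with rfl | rfl <;> rcases hN hby with rfl | rfl <;> simp_all [Sym2.eq_swap]
  have hadj : G.Adj x y := G.mem_edgeSet.mp (hxy ▸ hac)
  have hq : (w.reverse.append (r.cons hadj)).support = A.reverse ++ x :: y :: B := by
    simp [Walk.support_append, hA, hB]
  refine ⟨x, y, _, _, ⟨_, Walk.isPath_def _ |>.mpr ?_⟩, hxy, hp, hq, ?_⟩
  · rw [hq]
    exact hnd.sublist (.append_left (.cons_cons x (.cons b (.refl _))) _)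
  · rw [hq, p.2.support_nodup.erase_eq_of_eq_append (A := A.reverse ++ [x]) (B := y :: B)
        (by simp [hp])]
    simp

end SimpleGraph

namespace IsTrackingSet

open SimpleGraph

variable {V W : Type*} [DecidableEq V] [DecidableEq W] {G : SimpleGraph V} {G' : SimpleGraph W}
  {T : Finset V} {T' : Finset W}

theorem comap (f : G' ↪g G) {s t : W} (hT : IsTrackingSet G (f s) (f t) T)
    (hTT' : ∀ x, x ∈ T' ↔ f x ∈ T) : IsTrackingSet G' s t T' := fun p q h =>
  Path.mapEmbedding_injective f s t <| hT _ _ <| by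
    simp only [Path.mapEmbedding_coe, Walk.support_map, Embedding.coe_toHom,
      List.filter_mem_map hTT']
    exact congrArg _ h

variable {s t a b c : V}

-- A path through `b` and its bypass differ only in `b`, so only `b` can tell them apart.
theorem mem_of_neighborSet_subset (hT : IsTrackingSet G s t T) (hN : G.neighborSet b ⊆ {a, c})
    (hac : G.Adj a c) (hbs : b ≠ s) (hbt : b ≠ t) (hb : ∃ p : G.Path s t, b ∈ p.1.support) :
    b ∈ T := by
  by_contra hbT
  obtain ⟨p, hbp⟩ := hb
  obtain ⟨x, y, A, B, q, -, hp, hq, -⟩ := p.exists_bypass hN hac hbs hbt hbp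
  have hpq : p = q := hT p q (by simp [hp, hq, List.filter_cons, hbT])
  simpa [hp, hq] using congrArg (fun r : G.Path s t => r.1.support.length) hpq

theorem of_induce_ne (hN : G.neighborSet b ⊆ {a, c}) (hac : G.Adj a c) (hbs : b ≠ s)
    (hbt : b ≠ t) {T' : Finset {v : V | v ≠ b}}
    (hT' : IsTrackingSet (G.induce {v : V | v ≠ b}) ⟨s, hbs.symm⟩ ⟨t, hbt.symm⟩ T')
    (hTT' : ∀ v, v ∈ T' ↔ ↑v ∈ T) (hbT : b ∈ T) : IsTrackingSet G s t T := by
  have eq_of_notMem : ∀ p q : G.Path s t, b ∉ p.1.support → b ∉ q.1.support →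
      p.1.support.filter (· ∈ T) = q.1.support.filter (· ∈ T) → p = q := by
    intro p q hp hq h
    obtain ⟨p', hp'⟩ :=
      p.exists_induce_support_eq (S := {v | v ≠ b}) fun x hx hxb => hp (hxb ▸ hx)
    obtain ⟨q', hq'⟩ :=
      q.exists_induce_support_eq (S := {v | v ≠ b}) fun x hx hxb => hq (hxb ▸ hx)
    have hpq' : p' = q' := hT' p' q' <| List.map_injective_iff.mpr Subtype.val_injective <| by
      rw [← List.filter_mem_map hTT', ← List.filter_mem_map hTT', hp', hq', h]
    exact Subtype.ext (Walk.ext_support (by rw [← hp', ← hq', hpq']))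
  intro p q h
  have hbpq : b ∈ p.1.support ↔ b ∈ q.1.support := by
    simpa [hbT] using congrArg (b ∈ ·) h
  by_cases hbp : b ∈ p.1.support
  swap
  · exact eq_of_notMem p q hbp (hbpq.not.mp hbp) h
  obtain ⟨x₁, y₁, A₁, B₁, p', hxy₁, hp, hp', hpe⟩ := p.exists_bypass hN hac hbs hbt hbp
  obtain ⟨x₂, y₂, A₂, B₂, q', hxy₂, hq, hq', hqe⟩ :=
    q.exists_bypass hN hac hbs hbt (hbpq.mp hbp)
  have hpq' : p' = q' := eq_of_notMem p' q'
    (hpe ▸ p.2.support_nodup.not_mem_erase) (hqe ▸ q.2.support_nodup.not_mem_erase)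
    (by rw [hpe, hqe, ← List.erase_filter, ← List.erase_filter, h])
  obtain ⟨rfl, rfl, rfl, rfl⟩ := (hp' ▸ p'.2.support_nodup).append_cons_cons_inj_of_sym2_eq
    (hp'.symm.trans (hpq' ▸ hq')) (hxy₁.trans hxy₂.symm)
  exact Subtype.ext (Walk.ext_support (hp.trans hq.symm))

end IsTrackingSet

open scoped Classical in
theorem triangle_rule_general {V : Type*} [Fintype V] [DecidableEq V]
    (G : SimpleGraph V) [DecidableRel G.Adj] (s t a b c : V) (k : ℕ)
    (hk : 1 ≤ k) (hbs : b ≠ s) (hbt : b ≠ t)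
    (hNb : G.neighborFinset b = {a, c}) (hac : G.Adj a c)
    (hpartV : ∀ v : V, ∃ p : G.Path s t, v ∈ p.1.support) :
    ((∃ T : Finset V, IsTrackingSet G s t T ∧ T.card ≤ k) ↔
      (∃ T' : Finset {v : V | v ≠ b},
        IsTrackingSet (G.induce {v : V | v ≠ b}) ⟨s, Ne.symm hbs⟩
          ⟨t, Ne.symm hbt⟩ T' ∧ T'.card ≤ k - 1)) ∧
    (∀ T : Finset V, IsTrackingSet G s t T → b ∈ T →
      (∀ T'' : Finset V, IsTrackingSet G s t T'' → b ∈ T'' →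
        T.card ≤ T''.card) →
      IsTrackingSet (G.induce {v : V | v ≠ b}) ⟨s, Ne.symm hbs⟩
        ⟨t, Ne.symm hbt⟩ ((T.erase b).subtype (· ∈ {v : V | v ≠ b}))) := by
  have hN : G.neighborSet b ⊆ {a, c} := by simp [← G.coe_neighborFinset, hNb]
  have hne : ∀ v : {v : V | v ≠ b}, (v : V) ≠ b := fun v => v.2
  have hrestrict : ∀ T : Finset V, IsTrackingSet G s t T →
      IsTrackingSet (G.induce {v : V | v ≠ b}) ⟨s, hbs.symm⟩ ⟨t, hbt.symm⟩
        ((T.erase b).subtype (· ∈ {v : V | v ≠ b})) :=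
    fun T hT => hT.comap (Embedding.induce _) fun v => by simp [hne v]
  refine ⟨⟨fun ⟨T, hT, hTk⟩ => ⟨_, hrestrict T hT, ?_⟩, fun ⟨T', hT', hT'k⟩ => ?_⟩,
    fun T hT _ _ => hrestrict T hT⟩
  · have hbT := hT.mem_of_neighborSet_subset hN hac hbs hbt (hpartV b)
    grw [Finset.card_subtype, Finset.card_filter_le, Finset.card_erase_of_mem hbT]
    omega
  · refine ⟨insert b (T'.map (Function.Embedding.subtype _)),
      hT'.of_induce_ne hN hac hbs hbt (fun v => by simp [hne v]) (Finset.mem_insert_self _ _), ?_⟩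
    grw [Finset.card_insert_le, Finset.card_map]
    omega

open scoped Classical in
/-- triangle rule. If `b ∉ {s, t}` has `N(b) = {a, c}` with `a`
and `c` adjacent, then `G` has a tracking set of size at most `k` iff `G - b`
has one of size at most `k - 1`; moreover for every tracking set `T` of `G`
of minimum size among those containing `b`, the set `T \ {b}` is a tracking
set of `G - b`. -/
theorem triangle_rule {V : Type*} [Fintype V] [DecidableEq V]
    (G : SimpleGraph V) [DecidableRel G.Adj] (s t a b c : V) (k : ℕ)
    (hk : 1 ≤ k) (hbs : b ≠ s) (hbt : b ≠ t)
    (hNb : G.neighborFinset b = {a, c}) (hac : G.Adj a c)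
    (hpartV : ∀ v : V, ∃ p : G.Path s t, v ∈ p.1.support)
    (hpartE : ∀ e ∈ G.edgeSet, ∃ p : G.Path s t, e ∈ p.1.edges) :
    ((∃ T : Finset V, IsTrackingSet G s t T ∧ T.card ≤ k) ↔
      (∃ T' : Finset {v : V | v ≠ b},
        IsTrackingSet (G.induce {v : V | v ≠ b}) ⟨s, Ne.symm hbs⟩
          ⟨t, Ne.symm hbt⟩ T' ∧ T'.card ≤ k - 1)) ∧
    (∀ T : Finset V, IsTrackingSet G s t T → b ∈ T →
      (∀ T'' : Finset V, IsTrackingSet G s t T'' → b ∈ T'' →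
        T.card ≤ T''.card) →
      IsTrackingSet (G.induce {v : V | v ≠ b}) ⟨s, Ne.symm hbs⟩
        ⟨t, Ne.symm hbt⟩ ((T.erase b).subtype (· ∈ {v : V | v ≠ b}))) :=
  triangle_rule_general G s t a b c k hk hbs hbt hNb hac hpartV
end

section
/- Let G be a planar s-t graph with f faces (in some planar embedding), minimum degree at least 2, and at most one degree-2 vertex between any two consecutive vertices of degree ≥ 3 on any path. If the number of vertices of degree at least 3 is at most 2(f − 2) and f ≤ 2k + 1, then the total number of vertices of G is at most 10k − 3. -/
/-- a connected planar s-t graph with `f` faces (encoded by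
Euler's formula `|V| + f = |E| + 2`), minimum degree at least 2, no two
adjacent degree-2 vertices, at most `2(f - 2)` vertices of degree at least 3,
and `f ≤ 2k + 1`, has at most `10k - 3` vertices. -/
theorem planar_linear_kernel_bound {V : Type*} [Fintype V] [DecidableEq V]
    (G : SimpleGraph V) [DecidableRel G.Adj] (s t : V) (f k : ℕ)
    (hconn : G.Connected)
    (heuler : Fintype.card V + f = G.edgeFinset.card + 2)
    (hmindeg : ∀ v : V, 2 ≤ G.degree v)
    (hdeg2 : ∀ u v : V, G.Adj u v → G.degree u = 2 → G.degree v ≠ 2)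
    (hV3 : (Finset.univ.filter (fun v => 3 ≤ G.degree v)).card ≤ 2 * (f - 2))
    (hf : f ≤ 2 * k + 1) :
    Fintype.card V ≤ 10 * k - 3 := by
  classical
  set n := Fintype.card V with hn
  set m := G.edgeFinset.card with hm
  set V2 := Finset.univ.filter (fun v => G.degree v = 2) with hV2def
  set V3 := Finset.univ.filter (fun v => 3 ≤ G.degree v) with hV3def
  -- split of vertices
  have hsplit : V2.card + V3.card = n := by
    rw [← Finset.card_union_of_disjoint]
    · have : V2 ∪ V3 = Finset.univ := by
        ext v
        simp only [hV2def, hV3def, Finset.mem_union, Finset.mem_filter,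
          Finset.mem_univ, true_and, iff_true]
        have := hmindeg v
        omega
      rw [this, hn, Finset.card_univ]
    · rw [Finset.disjoint_left]
      intro v hv hv'
      simp only [hV2def, hV3def, Finset.mem_filter, Finset.mem_univ, true_and] at hv hv'
      omega
  -- 2 * |V2| ≤ m : incidence sets of degree-2 vertices are pairwise disjoint
  have hdisj : ∀ u ∈ V2, ∀ v ∈ V2, u ≠ v →
      Disjoint (G.incidenceFinset u) (G.incidenceFinset v) := by
    intro u hu v hv huv
    simp only [hV2def, Finset.mem_filter, Finset.mem_univ, true_and] at hu hv
    rw [Finset.disjoint_left]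
    intro e heu hev
    rw [SimpleGraph.mem_incidenceFinset] at heu hev
    exact hdeg2 u v (G.adj_of_mem_incidenceSet huv heu hev) hu hv
  have hkey : 2 * V2.card ≤ m := by
    have hcard : (V2.biUnion (fun v => G.incidenceFinset v)).card = 2 * V2.card := by
      rw [Finset.card_biUnion hdisj]
      have : ∀ v ∈ V2, (G.incidenceFinset v).card = 2 := by
        intro v hv
        simp only [hV2def, Finset.mem_filter, Finset.mem_univ, true_and] at hv
        rw [G.card_incidenceFinset_eq_degree, hv]
      rw [Finset.sum_congr rfl this, Finset.sum_const, smul_eq_mul, mul_comm]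
    have hsub : V2.biUnion (fun v => G.incidenceFinset v) ⊆ G.edgeFinset := by
      intro e he
      rcases Finset.mem_biUnion.mp he with ⟨v, _, hev⟩
      rw [SimpleGraph.mem_incidenceFinset] at hev
      exact SimpleGraph.mem_edgeFinset.mpr hev.1
    calc 2 * V2.card = _ := hcard.symm
      _ ≤ m := Finset.card_le_card hsub
  -- 2n ≤ 2m from min degree
  have hnm : 2 * n ≤ 2 * m := by
    have hsum := G.sum_degrees_eq_twice_card_edges
    have : ∑ v : V, 2 ≤ ∑ v : V, G.degree v :=
      Finset.sum_le_sum fun v _ => hmindeg v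
    simp only [Finset.sum_const, smul_eq_mul, mul_comm] at this
    rw [hsum] at this
    rw [hn, hm]
    omega
  omega
end
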